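/- arXiv:2007.06955 — 2 statements merged into one kernel-verified Lean document; each statement's English description precedes it below -/
import Mathlib

section
/- The function P(α) = ∫₀^{2π} cos x · √(1 + α cos x) dx is strictly positive for 0 < α ≤ 1. -/
open Real intervalIntegral

/-- P(α) = ∫₀^{2π} cos x · √(1 + α cos x) dx is strictly positive for 0 < α ≤ 1. -/
theorem P_pos (P : ℝ → ℝ)
    (hP : ∀ α : ℝ, P α = ∫ x in (0:ℝ)..(2 * π), Real.cos x * Real.sqrt (1 + α * Real.cos x)) :
    ∀ α : ℝ, 0 < α → α ≤ 1 → 0 < P α := by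
  intro α hα hα1
  set g : ℝ → ℝ := fun x => Real.cos x * (Real.sqrt (1 + α * Real.cos x) - 1) with hg
  have hcont : Continuous g := by
    apply Continuous.mul Real.continuous_cos
    exact ((Real.continuous_sqrt.comp (by continuity)).sub continuous_const)
  have hnonneg : ∀ x : ℝ, 0 ≤ g x := by
    intro x
    rcases le_or_gt 0 (Real.cos x) with h | h
    · apply mul_nonneg h
      have h1 : (1:ℝ) ≤ Real.sqrt (1 + α * Real.cos x) :=
        Real.le_sqrt_of_sq_le (by nlinarith)
      linarith
    · have h1 : Real.sqrt (1 + α * Real.cos x) ≤ 1 := by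
        calc Real.sqrt (1 + α * Real.cos x) ≤ Real.sqrt 1 :=
              Real.sqrt_le_sqrt (by nlinarith)
          _ = 1 := Real.sqrt_one
      have : g x = (-Real.cos x) * (1 - Real.sqrt (1 + α * Real.cos x)) := by
        simp [hg]; ring
      rw [this]
      apply mul_nonneg (by linarith) (by linarith)
  have hpos : ∀ x ∈ Set.Ioo (0:ℝ) (π/2), 0 < g x := by
    intro x hx
    have hc : 0 < Real.cos x := by
      apply Real.cos_pos_of_mem_Ioo
      constructor
      · linarith [hx.1, Real.pi_pos]
      · exact hx.2
    apply mul_pos hc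
    have h1 : (1:ℝ) < Real.sqrt (1 + α * Real.cos x) :=
      Real.lt_sqrt_of_sq_lt (by nlinarith)
    linarith
  have key : P α = ∫ x in (0:ℝ)..(2*π), g x := by
    rw [hP]
    have hcong : (∫ x in (0:ℝ)..(2*π), Real.cos x * Real.sqrt (1 + α * Real.cos x)) =
        ∫ x in (0:ℝ)..(2*π), (g x + Real.cos x) := by
      apply intervalIntegral.integral_congr
      intro x _
      simp [hg]; ring
    rw [hcong, intervalIntegral.integral_add (hcont.intervalIntegrable _ _)
      (Real.continuous_cos.intervalIntegrable _ _)]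
    simp
  have hsplit : (∫ x in (0:ℝ)..(2*π), g x) =
      (∫ x in (0:ℝ)..(π/2), g x) + ∫ x in (π/2:ℝ)..(2*π), g x := by
    rw [intervalIntegral.integral_add_adjacent_intervals
      (hcont.intervalIntegrable _ _) (hcont.intervalIntegrable _ _)]
  have h1 : 0 < ∫ x in (0:ℝ)..(π/2), g x := by
    apply intervalIntegral.intervalIntegral_pos_of_pos_on (hcont.intervalIntegrable _ _) hpos
    linarith [Real.pi_pos]
  have h2 : (0:ℝ) ≤ ∫ x in (π/2:ℝ)..(2*π), g x := by
    apply intervalIntegral.integral_nonneg (by linarith [Real.pi_pos])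
    intro x _; exact hnonneg x
  rw [key, hsplit]
  linarith
end

section
/- The function Q(α) = ∫₀^{2π} √(1 + α cos x) dx is monotonically decreasing on [0, 1]. -/
open Real intervalIntegral

lemma key_pair (a b c : ℝ) (ha : 0 ≤ a) (hab : a ≤ b) (hb : b ≤ 1) (hc : |c| ≤ 1) :
    Real.sqrt (1 + b * c) + Real.sqrt (1 - b * c)
      ≤ Real.sqrt (1 + a * c) + Real.sqrt (1 - a * c) := by
  have habs_b : |b * c| ≤ 1 := by
    rw [abs_mul]
    calc |b| * |c| ≤ 1 * 1 := by
          apply mul_le_mul _ hc (abs_nonneg c) zero_le_one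
          rw [abs_of_nonneg (ha.trans hab)]; exact hb
      _ = 1 := by ring
  have habs_a : |a * c| ≤ 1 := by
    rw [abs_mul]
    calc |a| * |c| ≤ 1 * 1 := by
          apply mul_le_mul _ hc (abs_nonneg c) zero_le_one
          rw [abs_of_nonneg ha]; exact hab.trans hb
      _ = 1 := by ring
  have h1b : (0:ℝ) ≤ 1 + b * c := by have := abs_le.mp habs_b; linarith [this.1]
  have h2b : (0:ℝ) ≤ 1 - b * c := by have := abs_le.mp habs_b; linarith [this.2]
  have h1a : (0:ℝ) ≤ 1 + a * c := by have := abs_le.mp habs_a; linarith [this.1]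
  have h2a : (0:ℝ) ≤ 1 - a * c := by have := abs_le.mp habs_a; linarith [this.2]
  have hLHS : 0 ≤ Real.sqrt (1 + b * c) + Real.sqrt (1 - b * c) :=
    add_nonneg (Real.sqrt_nonneg _) (Real.sqrt_nonneg _)
  have hRHS : 0 ≤ Real.sqrt (1 + a * c) + Real.sqrt (1 - a * c) :=
    add_nonneg (Real.sqrt_nonneg _) (Real.sqrt_nonneg _)
  have hsq : (Real.sqrt (1 + b * c) + Real.sqrt (1 - b * c))^2
      ≤ (Real.sqrt (1 + a * c) + Real.sqrt (1 - a * c))^2 := by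
    have eb : (Real.sqrt (1 + b * c) + Real.sqrt (1 - b * c))^2
        = 2 + 2 * Real.sqrt (1 - (b*c)^2) := by
      have : Real.sqrt (1 + b * c) * Real.sqrt (1 - b * c) = Real.sqrt (1 - (b*c)^2) := by
        rw [← Real.sqrt_mul h1b]; ring_nf
      nlinarith [Real.sq_sqrt h1b, Real.sq_sqrt h2b]
    have ea : (Real.sqrt (1 + a * c) + Real.sqrt (1 - a * c))^2
        = 2 + 2 * Real.sqrt (1 - (a*c)^2) := by
      have : Real.sqrt (1 + a * c) * Real.sqrt (1 - a * c) = Real.sqrt (1 - (a*c)^2) := by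
        rw [← Real.sqrt_mul h1a]; ring_nf
      nlinarith [Real.sq_sqrt h1a, Real.sq_sqrt h2a]
    rw [eb, ea]
    have : Real.sqrt (1 - (b*c)^2) ≤ Real.sqrt (1 - (a*c)^2) := by
      apply Real.sqrt_le_sqrt
      have h2 : a^2 ≤ b^2 := by nlinarith
      have h3 : a^2 * c^2 ≤ b^2 * c^2 := mul_le_mul_of_nonneg_right h2 (sq_nonneg c)
      nlinarith [h3]
    linarith
  nlinarith [hsq, hLHS, hRHS]

lemma cont_sqrt (α : ℝ) : Continuous (fun x => Real.sqrt (1 + α * Real.cos x)) :=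
  Real.continuous_sqrt.comp (continuous_const.add (continuous_const.mul Real.continuous_cos))

lemma Q_rewrite (α : ℝ) :
    (∫ x in (0:ℝ)..(2 * π), Real.sqrt (1 + α * Real.cos x))
      = ∫ x in (0:ℝ)..π, (Real.sqrt (1 + α * Real.cos x) + Real.sqrt (1 - α * Real.cos x)) := by
  have hint : ∀ a b : ℝ, IntervalIntegrable (fun x => Real.sqrt (1 + α * Real.cos x))
      MeasureTheory.volume a b := fun a b => (cont_sqrt α).intervalIntegrable a b
  have hsplit : (∫ x in (0:ℝ)..(2 * π), Real.sqrt (1 + α * Real.cos x))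
      = (∫ x in (0:ℝ)..π, Real.sqrt (1 + α * Real.cos x))
        + ∫ x in (π:ℝ)..(2 * π), Real.sqrt (1 + α * Real.cos x) :=
    (intervalIntegral.integral_add_adjacent_intervals (hint 0 π) (hint π (2*π))).symm
  have hshift : (∫ x in (π:ℝ)..(2 * π), Real.sqrt (1 + α * Real.cos x))
      = ∫ x in (0:ℝ)..π, Real.sqrt (1 - α * Real.cos x) := by
    have := intervalIntegral.integral_comp_add_right (a := (0:ℝ)) (b := π)
      (fun x => Real.sqrt (1 + α * Real.cos x)) π
    rw [zero_add, (by ring : π + π = 2 * π)] at this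
    rw [← this]
    apply intervalIntegral.integral_congr
    intro x _
    simp [Real.cos_add_pi]
    ring_nf
  rw [hsplit, hshift]
  exact (intervalIntegral.integral_add (hint 0 π)
      (((continuous_const.sub (continuous_const.mul Real.continuous_cos)).sqrt).intervalIntegrable 0 π)).symm

/-- Q(α) = ∫₀^{2π} √(1 + α cos x) dx is monotonically decreasing on [0,1]. -/
theorem Q_antitone (Q : ℝ → ℝ)
    (hQ : ∀ α : ℝ, Q α = ∫ x in (0:ℝ)..(2 * π), Real.sqrt (1 + α * Real.cos x)) :
    AntitoneOn Q (Set.Icc (0:ℝ) 1) := by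
  intro a ha b hb hab
  rw [hQ a, hQ b, Q_rewrite a, Q_rewrite b]
  apply intervalIntegral.integral_mono_on Real.pi_nonneg
  · exact ((cont_sqrt b).add (Real.continuous_sqrt.comp (continuous_const.sub
      (continuous_const.mul Real.continuous_cos)))).intervalIntegrable 0 π
  · exact ((cont_sqrt a).add (Real.continuous_sqrt.comp (continuous_const.sub
      (continuous_const.mul Real.continuous_cos)))).intervalIntegrable 0 π
  · intro x _
    exact key_pair a b (Real.cos x) ha.1 hab hb.2 (Real.abs_cos_le_one x)
end
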